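/- Let α be an n×n hermitian complex matrix with trace norm ‖α‖₁ = 1 and with no zero eigenvalues (α invertible). If φ is a hermitian matrix satisfying Tr[φβ] ≤ Tr[φα] = 1 for all hermitian β with ‖β‖₁ ≤ 1, then φ = P₊ − P₋, where P₊ and P₋ are the orthogonal projections onto the span of eigenvectors of α with positive and with negative eigenvalues respectively. In particular, the supporting functional of the trace-norm unit ball at such α is unique. -/

import Mathlib

open Matrix
open scoped ComplexOrder

noncomputable def traceNorm {ι : Type*} [Fintype ι] [DecidableEq ι]
    (A : Matrix ι ι ℂ) : ℝ :=
  (((Matrix.posSemidef_conjTranspose_mul_self A).1.eigenvectorUnitary.1 *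
      Matrix.diagonal (((↑) : ℝ → ℂ) ∘ (√·) ∘ (Matrix.posSemidef_conjTranspose_mul_self A).1.eigenvalues) *
      (star (Matrix.posSemidef_conjTranspose_mul_self A).1.eigenvectorUnitary : Matrix ι ι ℂ)).trace).re

noncomputable def mfun {ι : Type*} [Fintype ι] [DecidableEq ι] (g : ℝ → ℝ)
    (A : Matrix ι ι ℂ) : Matrix ι ι ℂ :=
  if hA : A.IsHermitian then
    (hA.eigenvectorUnitary : Matrix ι ι ℂ) *
      Matrix.diagonal (fun i => (g (hA.eigenvalues i) : ℂ)) *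
      (star hA.eigenvectorUnitary : Matrix ι ι ℂ)
  else 0

noncomputable def divDiff {ι : Type*} (g : ℝ → ℝ) (a : ι → ℝ) : Matrix ι ι ℝ :=
  Matrix.of fun i j =>
    if a i = a j then deriv g (a i) else (g (a i) - g (a j)) / (a i - a j)

noncomputable def Dop {ι : Type*} [Fintype ι] [DecidableEq ι] (g : ℝ → ℝ)
    {A : Matrix ι ι ℂ} (hA : A.IsHermitian) (B : Matrix ι ι ℂ) : Matrix ι ι ℂ :=
  (hA.eigenvectorUnitary : Matrix ι ι ℂ) *
    (((divDiff g hA.eigenvalues).map Complex.ofReal) ⊙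
      ((star hA.eigenvectorUnitary : Matrix ι ι ℂ) * B *
        (hA.eigenvectorUnitary : Matrix ι ι ℂ))) *
    (star hA.eigenvectorUnitary : Matrix ι ι ℂ)

noncomputable def relEnt {ι : Type*} [Fintype ι] [DecidableEq ι]
    (ρ σ : Matrix ι ι ℂ) : ℝ :=
  ((ρ * (mfun Real.log ρ - mfun Real.log σ)).trace).re

def ptrans {m n : Type*} (A : Matrix (m × n) (m × n) ℂ) : Matrix (m × n) (m × n) ℂ :=
  Matrix.of fun p q => A (p.1, q.2) (q.1, p.2)

/-- Orthogonal projection onto the span of eigenvectors of a hermitian matrix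
with positive eigenvalues. -/
noncomputable def posProj {ι : Type*} [Fintype ι] [DecidableEq ι]
    {α : Matrix ι ι ℂ} (hα : α.IsHermitian) : Matrix ι ι ℂ :=
  (hα.eigenvectorUnitary : Matrix ι ι ℂ) *
    Matrix.diagonal (fun i => if 0 < hα.eigenvalues i then (1 : ℂ) else 0) *
    (star hα.eigenvectorUnitary : Matrix ι ι ℂ)

/-- Orthogonal projection onto the span of eigenvectors of a hermitian matrix
with negative eigenvalues. -/
noncomputable def negProj {ι : Type*} [Fintype ι] [DecidableEq ι]
    {α : Matrix ι ι ℂ} (hα : α.IsHermitian) : Matrix ι ι ℂ :=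
  (hα.eigenvectorUnitary : Matrix ι ι ℂ) *
    Matrix.diagonal (fun i => if hα.eigenvalues i < 0 then (1 : ℂ) else 0) *
    (star hα.eigenvectorUnitary : Matrix ι ι ℂ)

/-! Testing the support condition against `± β / Tr β` for positive semidefinite `β` (trace norm
`1`), in particular for `β = v vᴴ`, shows that it means `-1 ≤ φ ≤ 1` in the Loewner order. In an eigenbasis `U` of `α`
the matrix `ψ = Uᴴ φ U` then has diagonal entries in `[-1, 1]`, while
`Σ λᵢ ψᵢᵢ = Tr (φ α) = 1 = ‖α‖₁ = Σ |λᵢ|`; equality termwise forces `ψᵢᵢ = sign λᵢ = ±1`, as no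
`λᵢ` vanishes. Since `1 ∓ ψ` is positive semidefinite, a diagonal entry `±1` of `ψ` kills the rest
of its column, so `ψ` is the diagonal matrix of signs, i.e. `φ = P₊ - P₋`. -/

open scoped MatrixOrder

section TraceNorm

variable {ι : Type*} [Fintype ι] [DecidableEq ι]

theorem traceNorm_eq_re_trace_abs (A : Matrix ι ι ℂ) :
    traceNorm A = (CFC.abs A).trace.re := by
  have hP := posSemidef_conjTranspose_mul_self A
  rw [traceNorm, CFC.abs, star_eq_conjTranspose A, CFC.sqrt_eq_cfc,
    cfc_nnreal_eq_real _ _ hP.nonneg, hP.1.cfc_eq]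
  simp [IsHermitian.cfc, Function.comp_def, Real.coe_toNNReal',
    max_eq_left (hP.eigenvalues_nonneg _)]

theorem traceNorm_neg (A : Matrix ι ι ℂ) : traceNorm (-A) = traceNorm A := by
  simp only [traceNorm_eq_re_trace_abs, CFC.abs_neg]

theorem Matrix.PosSemidef.traceNorm_eq {A : Matrix ι ι ℂ} (hA : A.PosSemidef) :
    traceNorm A = A.trace.re := by
  rw [traceNorm_eq_re_trace_abs, CFC.abs_of_nonneg A hA.nonneg]

theorem Matrix.IsHermitian.trace_cfc {A : Matrix ι ι ℂ} (hA : A.IsHermitian) (f : ℝ → ℝ) :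
    (cfc f A).trace = ∑ i, (f (hA.eigenvalues i) : ℂ) := by
  rw [hA.cfc_eq, IsHermitian.cfc, Unitary.conjStarAlgAut_apply, trace_mul_cycle,
    Unitary.coe_star_mul_self, one_mul, trace_diagonal]
  rfl

theorem Matrix.IsHermitian.traceNorm_eq_sum_abs_eigenvalues {A : Matrix ι ι ℂ}
    (hA : A.IsHermitian) : traceNorm A = ∑ i, |hA.eigenvalues i| := by
  rw [traceNorm_eq_re_trace_abs, CFC.abs_eq_cfc_norm A hA.isSelfAdjoint, hA.trace_cfc,
    Complex.re_sum]
  simp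

theorem Matrix.IsHermitian.trace_mul_eq_sum {A : Matrix ι ι ℂ} (hA : A.IsHermitian)
    (φ : Matrix ι ι ℂ) :
    (φ * A).trace = ∑ i, (star (hA.eigenvectorUnitary : Matrix ι ι ℂ) * φ *
      hA.eigenvectorUnitary) i i * hA.eigenvalues i := by
  conv_lhs => rw [hA.spectral_theorem, Unitary.conjStarAlgAut_apply, ← mul_assoc, ← mul_assoc,
    trace_mul_cycle, ← mul_assoc]
  simp [trace, mul_diagonal]

end TraceNorm

section DualBall

variable {ι : Type*} [Fintype ι] [DecidableEq ι] {φ : Matrix ι ι ℂ}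

theorem re_trace_mul_le_re_trace_of_posSemidef
    (hφ : ∀ β : Matrix ι ι ℂ, β.IsHermitian → traceNorm β ≤ 1 → (φ * β).trace.re ≤ 1)
    {β : Matrix ι ι ℂ} (hβ : β.PosSemidef) : (φ * β).trace.re ≤ β.trace.re := by
  rcases eq_or_ne β.trace 0 with h0 | h0
  · simp [hβ.trace_eq_zero_iff.mp h0]
  have ht : 0 < β.trace.re := (Complex.pos_iff.mp (hβ.trace_nonneg.lt_of_ne h0.symm)).1
  have hβ' : (β.trace.re⁻¹ • β).PosSemidef := hβ.smul (inv_nonneg.mpr ht.le)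
  have hβ'_norm : traceNorm (β.trace.re⁻¹ • β) = 1 := by
    rw [hβ'.traceNorm_eq, trace_smul, Complex.smul_re, smul_eq_mul, inv_mul_cancel₀ ht.ne']
  have hφβ' := hφ _ hβ'.1 hβ'_norm.le
  rwa [Matrix.mul_smul, trace_smul, Complex.smul_re, smul_eq_mul, inv_mul_le_iff₀ ht,
    mul_one] at hφβ'

theorem le_one_of_forall_re_trace_mul_le (hφH : φ.IsHermitian)
    (h : ∀ β : Matrix ι ι ℂ, β.PosSemidef → (φ * β).trace.re ≤ β.trace.re) : φ ≤ 1 := by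
  have h1φ : (1 - φ).IsHermitian := isHermitian_one.sub hφH
  refine le_iff.mpr (PosSemidef.of_dotProduct_mulVec_nonneg h1φ fun x => ?_)
  have hx := h _ (posSemidef_vecMulVec_self_star x)
  rw [mul_vecMulVec, trace_vecMulVec, trace_vecMulVec, dotProduct_comm,
    dotProduct_comm x] at hx
  refine Complex.nonneg_iff.mpr ⟨?_, (h1φ.im_star_dotProduct_mulVec_self x).symm⟩
  rw [sub_mulVec, one_mulVec, dotProduct_sub, Complex.sub_re]
  linarith

theorem neg_one_le_and_le_one_of_re_trace_mul_le_one (hφH : φ.IsHermitian)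
    (hφ : ∀ β : Matrix ι ι ℂ, β.IsHermitian → traceNorm β ≤ 1 → (φ * β).trace.re ≤ 1) :
    -1 ≤ φ ∧ φ ≤ 1 := by
  have hnegφ : ∀ β : Matrix ι ι ℂ, β.IsHermitian → traceNorm β ≤ 1 →
      (-φ * β).trace.re ≤ 1 := by
    intro β hβ hβ_norm
    rw [neg_mul, ← mul_neg]
    exact hφ _ hβ.neg (by rwa [traceNorm_neg])
  exact ⟨neg_le.mp (le_one_of_forall_re_trace_mul_le hφH.neg fun _ =>
      re_trace_mul_le_re_trace_of_posSemidef hnegφ),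
    le_one_of_forall_re_trace_mul_le hφH fun _ => re_trace_mul_le_re_trace_of_posSemidef hφ⟩

end DualBall

theorem Matrix.PosSemidef.apply_eq_zero_of_apply_self_eq_zero {ι 𝕜 : Type*} [Fintype ι]
    [RCLike 𝕜] {A : Matrix ι ι 𝕜} (hA : A.PosSemidef) {i : ι} (hi : A i i = 0) (j : ι) :
    A j i = 0 := by
  classical
  have hAe : A *ᵥ Pi.single i 1 = 0 :=
    (hA.dotProduct_mulVec_zero_iff _).mp (by simpa [mulVec_single, dotProduct_single] using hi)
  simpa [mulVec_single] using congrFun hAe j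

namespace Matrix

variable {ι : Type*} [DecidableEq ι] {ψ : Matrix ι ι ℂ}

theorem abs_re_apply_self_le_one (h₁ : -1 ≤ ψ) (h₂ : ψ ≤ 1) (i : ι) : |(ψ i i).re| ≤ 1 := by
  have hle := (Complex.nonneg_iff.mp ((le_iff.mp h₂).diag_nonneg (i := i))).1
  have hge := (Complex.nonneg_iff.mp ((le_iff.mp h₁).diag_nonneg (i := i))).1
  simp only [sub_apply, neg_apply, one_apply_eq, Complex.sub_re, Complex.neg_re,
    Complex.one_re] at hle hge
  exact abs_le.mpr ⟨by linarith, by linarith⟩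

variable [Fintype ι]

theorem apply_eq_zero_of_apply_self_eq_one (h : ψ ≤ 1) {i : ι} (hi : ψ i i = 1) {j : ι}
    (hj : j ≠ i) : ψ j i = 0 := by
  simpa [one_apply_ne hj] using
    (le_iff.mp h).apply_eq_zero_of_apply_self_eq_zero (i := i) (by simp [hi]) j

theorem apply_eq_zero_of_apply_self_eq_neg_one (h : -1 ≤ ψ) {i : ι} (hi : ψ i i = -1) {j : ι}
    (hj : j ≠ i) : ψ j i = 0 := by
  simpa [one_apply_ne hj] using
    (le_iff.mp h).apply_eq_zero_of_apply_self_eq_zero (i := i) (by simp [hi]) j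

theorem eq_diagonal_sign_of_sum_eq_sum_abs (h₁ : -1 ≤ ψ) (h₂ : ψ ≤ 1) {μ : ι → ℝ}
    (hμ : ∀ i, μ i ≠ 0) (hsum : ∑ i, μ i * (ψ i i).re = ∑ i, |μ i|) :
    ψ = diagonal fun i => (Real.sign (μ i) : ℂ) := by
  have hterm : ∀ i, μ i * (ψ i i).re = |μ i| := by
    refine fun i => (Finset.sum_eq_sum_iff_of_le fun i _ => ?_).mp hsum i (Finset.mem_univ i)
    calc μ i * (ψ i i).re ≤ |μ i| * |(ψ i i).re| := (le_abs_self _).trans (abs_mul _ _).le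
      _ ≤ |μ i| := mul_le_of_le_one_right (abs_nonneg _) (abs_re_apply_self_le_one h₁ h₂ i)
  have hdiag : ∀ i, ψ i i = Real.sign (μ i) := by
    intro i
    have hψ : ψ.IsHermitian := by simpa using isHermitian_one.sub (le_iff.mp h₂).1
    have hre : (ψ i i).re = Real.sign (μ i) := by
      refine mul_left_cancel₀ (hμ i) ((hterm i).trans ?_)
      rcases (hμ i).lt_or_gt with hneg | hpos
      · rw [abs_of_neg hneg, Real.sign_of_neg hneg, mul_neg_one]
      · rw [abs_of_pos hpos, Real.sign_of_pos hpos, mul_one]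
    rw [← hψ.coe_re_apply_self i]
    exact congrArg _ hre
  ext j i
  rcases eq_or_ne j i with rfl | hji
  · simp [hdiag]
  rw [diagonal_apply_ne _ hji]
  rcases Real.sign_apply_eq_of_ne_zero _ (hμ i) with hs | hs
  · exact apply_eq_zero_of_apply_self_eq_neg_one h₁ (by simp [hdiag, hs]) hji
  · exact apply_eq_zero_of_apply_self_eq_one h₂ (by simp [hdiag, hs]) hji

end Matrix

theorem posProj_sub_negProj {ι : Type*} [Fintype ι] [DecidableEq ι] {α : Matrix ι ι ℂ}
    (hα : α.IsHermitian) :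
    posProj hα - negProj hα = (hα.eigenvectorUnitary : Matrix ι ι ℂ) *
      diagonal (fun i => (Real.sign (hα.eigenvalues i) : ℂ)) *
      (star hα.eigenvectorUnitary : Matrix ι ι ℂ) := by
  rw [posProj, negProj, ← sub_mul, ← mul_sub, diagonal_sub]
  congr
  funext i
  rcases lt_trichotomy (hα.eigenvalues i) 0 with h | h | h
  · simp [h, h.not_gt, Real.sign_of_neg h]
  · simp [h]
  · simp [h, h.not_gt, Real.sign_of_pos h]

theorem supporting_functional_of_traceNorm_ball_unique
    {N : ℕ} (α : Matrix (Fin N) (Fin N) ℂ) (hα : α.IsHermitian)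
    (hnorm : traceNorm α = 1) (hinv : ∀ i, hα.eigenvalues i ≠ 0)
    (φ : Matrix (Fin N) (Fin N) ℂ) (hφ : φ.IsHermitian)
    (hφα : ((φ * α).trace).re = 1)
    (hφsupp : ∀ β : Matrix (Fin N) (Fin N) ℂ, β.IsHermitian → traceNorm β ≤ 1 →
      ((φ * β).trace).re ≤ ((φ * α).trace).re) :
    φ = posProj hα - negProj hα := by
  obtain ⟨h₁, h₂⟩ := neg_one_le_and_le_one_of_re_trace_mul_le_one hφ
    fun β hβ hβ_norm => (hφsupp β hβ hβ_norm).trans hφα.le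
  have hψ := eq_diagonal_sign_of_sum_eq_sum_abs
    (by simpa using star_left_conjugate_le_conjugate h₁ (hα.eigenvectorUnitary : Matrix _ _ ℂ))
    (by simpa using star_left_conjugate_le_conjugate h₂ (hα.eigenvectorUnitary : Matrix _ _ ℂ))
    hinv (by
      rw [← hα.traceNorm_eq_sum_abs_eigenvalues, hnorm, ← hφα, hα.trace_mul_eq_sum,
        Complex.re_sum]
      simp [mul_comm])
  rw [posProj_sub_negProj, ← hψ]
  simp [← mul_assoc, mul_assoc _ _ (star _)]
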